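/- For all parameters A, B, C ∈ ℂ with (C;q)_n ≠ 0 for all n, all s ∈ ℕ, all x ∈ ℂ with |x| < 1, and all y ∈ ℂ with 0 < |y| < 1, the s-fold iterated Jackson q-derivative in the variable y of the function y ↦ Φ₁(A,B;C;q,q₁;x,y), evaluated at y, equals [(A;q)_s / ((1−q)^s (C;q)_s)] · Φ₁(q^s A, B; q^s C; q,q₁; x, y). (Equation (2.15).) -/

import Mathlib

open Complex

/-- The q-shifted factorial (z;q)_n = prod_{r=0}^{n-1} (1 - z q^r). -/
noncomputable def qPoch (q z : ℂ) (n : ℕ) : ℂ :=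
  ∏ r ∈ Finset.range n, (1 - z * q ^ r)

/-- The bibasic Humbert hypergeometric function Φ₁ on two independent bases q and q₁. -/
noncomputable def Phi1 (q q1 A B C x y : ℂ) : ℂ :=
  ∑' p : ℕ × ℕ,
    qPoch q A (p.1 + p.2) * qPoch q1 B p.1 /
      (qPoch q C (p.1 + p.2) * qPoch q1 q1 p.1 * qPoch q q p.2) * x ^ p.1 * y ^ p.2

/-- The Jackson p-derivative. -/
noncomputable def jackson (p : ℂ) (f : ℂ → ℂ) (x : ℂ) : ℂ :=
  (f x - f (p * x)) / ((1 - p) * x)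

/-!
Termwise, `D_q y ^ (k + 1) = [k + 1]_q y ^ k`, and the factor `[k + 1]_q` cancels the last factor of
`(q;q)_(k+1)`, while `(A;q)_(n+1) = (1 - A) (qA;q)_n` and its analogue for `C` turn the shifted
coefficients into those of `Φ₁` with `A, C` replaced by `qA, qC`; iterating gives the formula.
Termwise differentiation is justified by absolute convergence: `(A;q)_n` and `1 / (C;q)_n` are
bounded since they converge, the latter because `(C;q)_∞` is a convergent product without zero
factors, hence nonzero.
-/

open Filter Topology

lemma one_sub_pow_succ_ne_zero {p : ℂ} (hp : ‖p‖ < 1) (k : ℕ) : 1 - p ^ (k + 1) ≠ 0 := by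
  refine sub_ne_zero.2 fun h => ?_
  have := pow_lt_one₀ (norm_nonneg p) hp (Nat.succ_ne_zero k)
  rw [← norm_pow, ← h, norm_one] at this
  exact lt_irrefl _ this

lemma qPoch_succ (p z : ℂ) (n : ℕ) : qPoch p z (n + 1) = qPoch p z n * (1 - z * p ^ n) :=
  Finset.prod_range_succ _ n

lemma qPoch_succ' (p z : ℂ) (n : ℕ) : qPoch p z (n + 1) = (1 - z) * qPoch p (p * z) n := by
  rw [qPoch, qPoch, Finset.prod_range_succ']
  simp only [pow_succ, pow_zero, mul_one]
  rw [mul_comm]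
  congr 1
  exact Finset.prod_congr rfl fun r _ => by ring

lemma one_sub_mul_pow_ne_zero_of_qPoch_ne_zero {p z : ℂ} (hz : ∀ n, qPoch p z n ≠ 0) (r : ℕ) :
    1 - z * p ^ r ≠ 0 :=
  right_ne_zero_of_mul (qPoch_succ p z r ▸ hz (r + 1))

lemma summable_norm_mul_pow {p : ℂ} (hp : ‖p‖ < 1) (z : ℂ) :
    Summable fun r : ℕ => ‖z * p ^ r‖ := by
  simpa [norm_mul, norm_pow] using (summable_geometric_of_lt_one (norm_nonneg p) hp).mul_left ‖z‖

lemma tendsto_qPoch {p : ℂ} (hp : ‖p‖ < 1) (z : ℂ) :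
    Tendsto (qPoch p z) atTop (𝓝 (∏' r, (1 - z * p ^ r))) := by
  have := (multipliable_one_add_of_summable (f := fun r => -(z * p ^ r))
    (by simpa using summable_norm_mul_pow hp z)).tendsto_prod_tprod_nat
  simp only [← sub_eq_add_neg] at this
  exact this

lemma exists_norm_le_of_tendsto {E : Type*} [SeminormedAddGroup E] {u : ℕ → E} {L : E}
    (hu : Tendsto u atTop (𝓝 L)) :
    ∃ M, ∀ n, ‖u n‖ ≤ M :=
  let ⟨M, hM⟩ := hu.norm.bddAbove_range
  ⟨M, fun n => hM (Set.mem_range_self n)⟩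

lemma exists_norm_qPoch_le {p : ℂ} (hp : ‖p‖ < 1) (z : ℂ) : ∃ M, ∀ n, ‖qPoch p z n‖ ≤ M :=
  exists_norm_le_of_tendsto (tendsto_qPoch hp z)

lemma exists_norm_inv_qPoch_le {p z : ℂ} (hp : ‖p‖ < 1) (hz : ∀ r, 1 - z * p ^ r ≠ 0) :
    ∃ M, ∀ n, ‖(qPoch p z n)⁻¹‖ ≤ M := by
  have hlim : ∏' r, (1 - z * p ^ r) ≠ 0 := by
    simpa [sub_eq_add_neg] using tprod_one_add_ne_zero_of_summable
      (f := fun r => -(z * p ^ r)) (by simpa [sub_eq_add_neg] using hz)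
      (by simpa using summable_norm_mul_pow hp z)
  exact exists_norm_le_of_tendsto ((tendsto_qPoch hp z).inv₀ hlim)

lemma exists_norm_inv_qPoch_self_le {p : ℂ} (hp : ‖p‖ < 1) : ∃ M, ∀ n, ‖(qPoch p p n)⁻¹‖ ≤ M :=
  exists_norm_inv_qPoch_le hp fun r => pow_succ' p r ▸ one_sub_pow_succ_ne_zero hp r

lemma jackson_const_mul (p c : ℂ) (f : ℂ → ℂ) (x : ℂ) :
    jackson p (fun u => c * f u) x = c * jackson p f x := by
  simp only [jackson, ← mul_sub, mul_div_assoc]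

lemma jackson_tsum_mul_pow {ι : Type*} (a : ι → ℕ → ℂ) {p y : ℂ} (hy : y ≠ 0)
    (hsum : Summable fun i : ι × ℕ => a i.1 i.2 * y ^ i.2)
    (hsum' : Summable fun i : ι × ℕ => a i.1 i.2 * (p * y) ^ i.2) :
    jackson p (fun u => ∑' i : ι × ℕ, a i.1 i.2 * u ^ i.2) y =
      ∑' i : ι × ℕ, a i.1 (i.2 + 1) * ((1 - p ^ (i.2 + 1)) / (1 - p)) * y ^ i.2 := by
  rw [jackson, ← hsum.tsum_sub hsum', ← tsum_div_const]
  have hshift : Function.Injective (Prod.map id Nat.succ : ι × ℕ → ι × ℕ) :=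
    Function.injective_id.prodMap Nat.succ_injective
  rw [← hshift.tsum_eq]
  · refine tsum_congr fun i => ?_
    simp only [Prod.map_fst, Prod.map_snd, id, Nat.succ_eq_add_one, mul_pow, pow_succ]
    field_simp
  · rintro ⟨i, _ | k⟩ hi
    · simp at hi
    · exact ⟨(i, k), rfl⟩

noncomputable def phi1Coeff (q q1 A B C x : ℂ) (l k : ℕ) : ℂ :=
  qPoch q A (l + k) * qPoch q1 B l /
    (qPoch q C (l + k) * qPoch q1 q1 l * qPoch q q k) * x ^ l

lemma Phi1_eq_tsum_phi1Coeff (q q1 A B C x y : ℂ) :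
    Phi1 q q1 A B C x y = ∑' i : ℕ × ℕ, phi1Coeff q q1 A B C x i.1 i.2 * y ^ i.2 :=
  rfl

lemma summable_phi1Coeff_mul_pow {q q1 A B C x y : ℂ} (hq : ‖q‖ < 1) (hq1 : ‖q1‖ < 1)
    (hC : ∀ r, 1 - C * q ^ r ≠ 0) (hx : ‖x‖ < 1) (hy : ‖y‖ < 1) :
    Summable fun i : ℕ × ℕ => phi1Coeff q q1 A B C x i.1 i.2 * y ^ i.2 := by
  obtain ⟨MA, hMA⟩ := exists_norm_qPoch_le hq A
  obtain ⟨MB, hMB⟩ := exists_norm_qPoch_le hq1 B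
  obtain ⟨MC, hMC⟩ := exists_norm_inv_qPoch_le hq hC
  obtain ⟨M1, hM1⟩ := exists_norm_inv_qPoch_self_le hq1
  obtain ⟨Mq, hMq⟩ := exists_norm_inv_qPoch_self_le hq
  have hgeom : Summable fun i : ℕ × ℕ => ‖x‖ ^ i.1 * ‖y‖ ^ i.2 :=
    (summable_geometric_of_lt_one (norm_nonneg x) hx).mul_of_nonneg
      (summable_geometric_of_lt_one (norm_nonneg y) hy)
      (fun n => pow_nonneg (norm_nonneg x) n) (fun n => pow_nonneg (norm_nonneg y) n)
  refine .of_norm_bounded (hgeom.mul_left (MA * MB * MC * M1 * Mq)) fun ⟨l, k⟩ => ?_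
  have h0 : ∀ {M : ℝ} {u : ℕ → ℂ}, (∀ n, ‖u n‖ ≤ M) → 0 ≤ M :=
    fun h => (norm_nonneg _).trans (h 0)
  calc ‖phi1Coeff q q1 A B C x l k * y ^ k‖
      = ‖qPoch q A (l + k)‖ * ‖qPoch q1 B l‖ * ‖(qPoch q C (l + k))⁻¹‖ *
          ‖(qPoch q1 q1 l)⁻¹‖ * ‖(qPoch q q k)⁻¹‖ * (‖x‖ ^ l * ‖y‖ ^ k) := by
        simp only [phi1Coeff, norm_mul, norm_div, norm_inv, norm_pow]
        ring
    _ ≤ MA * MB * MC * M1 * Mq * (‖x‖ ^ l * ‖y‖ ^ k) := by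
        have hMA₀ := h0 hMA; have hMB₀ := h0 hMB; have hMC₀ := h0 hMC; have hM1₀ := h0 hM1
        gcongr
        exacts [hMA _, hMB _, hMC _, hM1 _, hMq _]

lemma phi1Coeff_succ_mul {q : ℂ} (hq : ‖q‖ < 1) (q1 A B C x : ℂ) (l k : ℕ) :
    phi1Coeff q q1 A B C x l (k + 1) * ((1 - q ^ (k + 1)) / (1 - q)) =
      (1 - A) / ((1 - q) * (1 - C)) * phi1Coeff q q1 (q * A) B (q * C) x l k := by
  have hk := one_sub_pow_succ_ne_zero hq k
  rw [phi1Coeff, phi1Coeff, ← add_assoc, qPoch_succ' q A, qPoch_succ' q C, qPoch_succ q q k,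
    ← pow_succ']
  field_simp

lemma qPoch_div_mul_succ (q A C : ℂ) (s : ℕ) :
    qPoch q A s / ((1 - q) ^ s * qPoch q C s) * ((1 - q ^ s * A) / ((1 - q) * (1 - q ^ s * C))) =
      qPoch q A (s + 1) / ((1 - q) ^ (s + 1) * qPoch q C (s + 1)) := by
  rw [div_mul_div_comm, qPoch_succ q A, qPoch_succ q C]
  congr 1 <;> ring

theorem jackson_Phi1 {q q1 A B C x y : ℂ} (hq : ‖q‖ < 1) (hq1 : ‖q1‖ < 1)
    (hC : ∀ r, 1 - C * q ^ r ≠ 0) (hx : ‖x‖ < 1) (hy0 : y ≠ 0) (hy : ‖y‖ < 1) :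
    jackson q (fun u => Phi1 q q1 A B C x u) y =
      (1 - A) / ((1 - q) * (1 - C)) * Phi1 q q1 (q * A) B (q * C) x y := by
  have hqy : ‖q * y‖ < 1 := by
    rw [norm_mul]; exact mul_lt_one_of_nonneg_of_lt_one_left (norm_nonneg q) hq hy.le
  simp only [Phi1_eq_tsum_phi1Coeff]
  rw [jackson_tsum_mul_pow _ hy0 (summable_phi1Coeff_mul_pow hq hq1 hC hx hy)
    (summable_phi1Coeff_mul_pow hq hq1 hC hx hqy), ← tsum_mul_left]
  simp only [phi1Coeff_succ_mul hq, mul_assoc]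

theorem stmt13_general (q q1 A B C x y : ℂ)
    (hq0 : 0 < ‖q‖) (hq1 : ‖q‖ < 1)
    (hq11 : ‖q1‖ < 1)
    (hC : ∀ n : ℕ, qPoch q C n ≠ 0)
    (s : ℕ) (hx : ‖x‖ < 1) (hy0 : 0 < ‖y‖) (hy : ‖y‖ < 1) :
    ((jackson q)^[s] (fun u => Phi1 q q1 A B C x u)) y =
      qPoch q A s / ((1 - q) ^ s * qPoch q C s) *
        Phi1 q q1 (q ^ s * A) B (q ^ s * C) x y := by
  induction s generalizing y with
  | zero => simp [qPoch]
  | succ s ih =>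
    have hqy0 : 0 < ‖q * y‖ := by rw [norm_mul]; exact mul_pos hq0 hy0
    have hqy : ‖q * y‖ < 1 := by
      rw [norm_mul]; exact mul_lt_one_of_nonneg_of_lt_one_left (norm_nonneg q) hq1 hy.le
    have hCs : ∀ r, 1 - q ^ s * C * q ^ r ≠ 0 := fun r => by
      rw [show q ^ s * C * q ^ r = C * q ^ (s + r) by ring]
      exact one_sub_mul_pow_ne_zero_of_qPoch_ne_zero hC _
    calc (jackson q)^[s + 1] (fun u => Phi1 q q1 A B C x u) y
        = jackson q (fun u => qPoch q A s / ((1 - q) ^ s * qPoch q C s) *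
            Phi1 q q1 (q ^ s * A) B (q ^ s * C) x u) y := by
          rw [Function.iterate_succ_apply', jackson, jackson, ih y hy0 hy, ih (q * y) hqy0 hqy]
      _ = qPoch q A s / ((1 - q) ^ s * qPoch q C s) * ((1 - q ^ s * A) /
            ((1 - q) * (1 - q ^ s * C)) * Phi1 q q1 (q * (q ^ s * A)) B (q * (q ^ s * C)) x y) := by
          rw [jackson_const_mul, jackson_Phi1 hq1 hq11 hCs hx (norm_pos_iff.1 hy0) hy]
      _ = qPoch q A (s + 1) / ((1 - q) ^ (s + 1) * qPoch q C (s + 1)) *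
            Phi1 q q1 (q ^ (s + 1) * A) B (q ^ (s + 1) * C) x y := by
          rw [← mul_assoc, qPoch_div_mul_succ, ← mul_assoc q, ← mul_assoc q, ← pow_succ']

theorem stmt13 (q q1 A B C x y : ℂ)
    (hq0 : 0 < ‖q‖) (hq1 : ‖q‖ < 1)
    (hq10 : 0 < ‖q1‖) (hq11 : ‖q1‖ < 1)
    (hC : ∀ n : ℕ, qPoch q C n ≠ 0)
    (s : ℕ) (hx : ‖x‖ < 1) (hy0 : 0 < ‖y‖) (hy : ‖y‖ < 1) :
    ((jackson q)^[s] (fun u => Phi1 q q1 A B C x u)) y =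
      qPoch q A s / ((1 - q) ^ s * qPoch q C s) *
        Phi1 q q1 (q ^ s * A) B (q ^ s * C) x y :=
  stmt13_general q q1 A B C x y hq0 hq1 hq11 hC s hx hy0 hy
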